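/- If (R, μ, P, σ) is a strongly braided commutative Rota–Baxter algebra of weight 0 (so μσ = μ), then the induced operations ≺_P(x⊗y) = xP(y) and ≻_P(x⊗y) = P(x)y satisfy ≺_P ∘ σ = ≻_P and ≻_P ∘ σ = ≺_P; that is, (R, ≺_P, ≻_P, σ) is a braided commutative dendriform algebra. -/

import Mathlib

set_option maxHeartbeats 1000000
noncomputable section
open TensorProduct LinearMap

/-- `f ⊗ id` on a triple tensor product. -/
def op12 {k M : Type} [Field k] [AddCommGroup M] [Module k M]
    (f : M ⊗[k] M →ₗ[k] M ⊗[k] M) : (M ⊗[k] M) ⊗[k] M →ₗ[k] (M ⊗[k] M) ⊗[k] M :=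
  rTensor M f

/-- `id ⊗ f` on a triple tensor product. -/
def op23 {k M : Type} [Field k] [AddCommGroup M] [Module k M]
    (f : M ⊗[k] M →ₗ[k] M ⊗[k] M) : (M ⊗[k] M) ⊗[k] M →ₗ[k] (M ⊗[k] M) ⊗[k] M :=
  (TensorProduct.assoc k M M M).symm.toLinearMap ∘ₗ lTensor M f
    ∘ₗ (TensorProduct.assoc k M M M).toLinearMap

/-- `id ⊗ f ⊗ id` on a fourfold tensor product (`f` acting on the middle two factors). -/
def midOp {k M : Type} [Field k] [AddCommGroup M] [Module k M]
    (f : M ⊗[k] M →ₗ[k] M ⊗[k] M) :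
    (M ⊗[k] M) ⊗[k] (M ⊗[k] M) →ₗ[k] (M ⊗[k] M) ⊗[k] (M ⊗[k] M) :=
  (TensorProduct.assoc k M M (M ⊗[k] M)).symm.toLinearMap
    ∘ₗ lTensor M (TensorProduct.assoc k M M M).toLinearMap
    ∘ₗ lTensor M (rTensor M f)
    ∘ₗ lTensor M (TensorProduct.assoc k M M M).symm.toLinearMap
    ∘ₗ (TensorProduct.assoc k M M (M ⊗[k] M)).toLinearMap

theorem LinearMap.comp_comp_eq_of_comp_eq_self {S M N : Type*} [Semiring S]
    [AddCommMonoid M] [AddCommMonoid N] [Module S M] [Module S N]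
    {mu : M →ₗ[S] N} {sg f g : M →ₗ[S] M} (hcomm : mu ∘ₗ sg = mu)
    (hfg : sg ∘ₗ f = g ∘ₗ sg) : (mu ∘ₗ g) ∘ₗ sg = mu ∘ₗ f := by
  rw [comp_assoc, ← hfg, ← comp_assoc, hcomm]

theorem strongly_braided_comm_RB_gives_braided_comm_dendriform
    {k R : Type} [Field k] [AddCommGroup R] [Module k R]
    (mu : R ⊗[k] R →ₗ[k] R)
    (sg : R ⊗[k] R →ₗ[k] R ⊗[k] R)
    -- braided commutativity μσ = μ :
    (hcomm : mu ∘ₗ sg = mu)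
    (P : R →ₗ[k] R)
    (hright : sg ∘ₗ rTensor R P = lTensor R P ∘ₗ sg)
    (hleft : sg ∘ₗ lTensor R P = rTensor R P ∘ₗ sg) :
    (mu ∘ₗ lTensor R P) ∘ₗ sg = mu ∘ₗ rTensor R P
      ∧ (mu ∘ₗ rTensor R P) ∘ₗ sg = mu ∘ₗ lTensor R P :=
  ⟨comp_comp_eq_of_comp_eq_self hcomm hright, comp_comp_eq_of_comp_eq_self hcomm hleft⟩
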